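/- arXiv:1403.5873 — 4 statements merged into one kernel-verified Lean document; each statement's English description precedes it below -/
import Mathlib

section
/- Let C be a regular multi-pointed category with kernels in which every regular epimorphism is saturating. Then C is 2-star-permutable if and only if the following holds: for every commutative cube in which the front face is a square of type (1), w: W → Y is a regular epimorphism, δ: W → D and β: Y → B are morphisms with β·w = d·δ, and the back face consists of the stars of the pullback relations (W×_D C)* of (g, δ) and (Y×_B A)* of (f, β) together with the comparison morphism λ: (W×_D C)* → (Y×_B A)* induced by w and c, the morphism λ is a regular epimorphism. -/
/-!
Both conditions are read on generalised elements, a witness being required only after a regular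
epimorphic cover. Then `Eq(f) Eq(g)* ≤ Eq(g) Eq(f)*` says: whenever `N x`, `x g = y g` and
`y f = z f`, locally there is `u` with `x f = u f` and `u g = z g`.

If this holds for all regular epimorphisms, take the generic element of `(Y ×_B A)*`. Since `w`
is saturating, its `N`-component lifts along `w` to an `N`-element of `W`; permutability of
`Eq(g)` and `Eq(c)*` then lifts the pair along the square of type (1) to `E`. This gives a map
into `(W ×_D C)*` whose composite with `λ` is a regular epimorphism, so `λ` is one.

Conversely, given `x, y, z` as above, apply the cube condition to the square formed by the first
projections of `Eq(f)` and of its image under `g × g`, with `w = δ = 1` and `β = g`: lifting the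
element `(x, (y, z))` along `λ` produces the required `u` as the second projection.
-/

open CategoryTheory CategoryTheory.Limits

universe v u

namespace Paper

variable {𝒞 : Type u} [Category.{v} 𝒞]

/-- `f` is a regular epimorphism: it is a coequaliser of some pair of morphisms. -/
def IsRegEpi {X Y : 𝒞} (f : X ⟶ Y) : Prop :=
  ∃ (Z : 𝒞) (a b : Z ⟶ X), a ≫ f = b ≫ f ∧
    ∀ {T : 𝒞} (h : X ⟶ T), a ≫ h = b ≫ h → ∃! u : Y ⟶ T, f ≫ u = h

/-- Regular epimorphisms are pullback-stable. -/
def RegEpisStable (𝒞 : Type u) [Category.{v} 𝒞] : Prop :=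
  ∀ {P X Y Z : 𝒞} (p₁ : P ⟶ X) (p₂ : P ⟶ Y) (f : X ⟶ Z) (g : Y ⟶ Z),
    IsPullback p₁ p₂ f g → IsRegEpi g → IsRegEpi p₁

/-- Every kernel pair admits a coequaliser. -/
def KernelPairsHaveCoequalisers (𝒞 : Type u) [Category.{v} 𝒞] : Prop :=
  ∀ {R X Y : 𝒞} (f : X ⟶ Y) (a b : R ⟶ X), IsKernelPair f a b →
    ∃ (Q : 𝒞) (q : X ⟶ Q), a ≫ q = b ≫ q ∧
      ∀ {T : 𝒞} (h : X ⟶ T), a ≫ h = b ≫ h → ∃! u : Q ⟶ T, q ≫ u = h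

/-- A relation from `X` to `Y`: a jointly monomorphic span. -/
structure Rel (𝒞 : Type u) [Category.{v} 𝒞] (X Y : 𝒞) where
  R : 𝒞
  p1 : R ⟶ X
  p2 : R ⟶ Y
  jm : ∀ {Z : 𝒞} (a b : Z ⟶ R), a ≫ p1 = b ≫ p1 → a ≫ p2 = b ≫ p2 → a = b

variable {X Y Z : 𝒞}

/-- `ρ` is a subrelation of `σ`. -/
def Rel.le (ρ σ : Rel 𝒞 X Y) : Prop :=
  ∃ j : ρ.R ⟶ σ.R, j ≫ σ.p1 = ρ.p1 ∧ j ≫ σ.p2 = ρ.p2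

/-- `ρ` and `σ` are the same relation (isomorphic as subobjects of `X × Y`). -/
def Rel.equiv (ρ σ : Rel 𝒞 X Y) : Prop := ρ.le σ ∧ σ.le ρ

/-- The opposite relation. -/
def Rel.op (ρ : Rel 𝒞 X Y) : Rel 𝒞 Y X :=
  ⟨ρ.R, ρ.p2, ρ.p1, fun a b h2 h1 => ρ.jm a b h1 h2⟩

/-- A morphism viewed as a relation. -/
def homRel (f : X ⟶ Y) : Rel 𝒞 X Y :=
  ⟨X, 𝟙 X, f, fun a b h _ => by simpa using h⟩

/-- The discrete (diagonal) relation on `X`. -/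
def diagRel (X : 𝒞) : Rel 𝒞 X X := homRel (𝟙 X)

/-- The kernel pair `Eq(f)` of `f` as a relation on `X`. -/
noncomputable def kerPairRel [HasPullbacks 𝒞] (f : X ⟶ Y) : Rel 𝒞 X X :=
  ⟨pullback f f, pullback.fst f f, pullback.snd f f,
    fun a b h1 h2 => pullback.hom_ext h1 h2⟩

/-- `τ` is the composite `σρ` (first `ρ` from `X` to `Y`, then `σ` from `Y` to `Z`),
i.e. the (regular epi, jointly mono) factorisation of the span induced on the
pullback of `ρ.p2` and `σ.p1`. -/
def IsRelComp [HasPullbacks 𝒞] (σ : Rel 𝒞 Y Z) (ρ : Rel 𝒞 X Y) (τ : Rel 𝒞 X Z) : Prop :=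
  ∃ e : pullback ρ.p2 σ.p1 ⟶ τ.R, IsRegEpi e ∧
    e ≫ τ.p1 = pullback.fst ρ.p2 σ.p1 ≫ ρ.p1 ∧
    e ≫ τ.p2 = pullback.snd ρ.p2 σ.p1 ≫ σ.p2

def Rel.IsReflexive (ρ : Rel 𝒞 X X) : Prop :=
  ∃ r : X ⟶ ρ.R, r ≫ ρ.p1 = 𝟙 X ∧ r ≫ ρ.p2 = 𝟙 X

def Rel.IsSymmetric (ρ : Rel 𝒞 X X) : Prop :=
  ∃ s : ρ.R ⟶ ρ.R, s ≫ ρ.p1 = ρ.p2 ∧ s ≫ ρ.p2 = ρ.p1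

def Rel.IsTransitive [HasPullbacks 𝒞] (ρ : Rel 𝒞 X X) : Prop :=
  ∃ t : pullback ρ.p2 ρ.p1 ⟶ ρ.R,
    t ≫ ρ.p1 = pullback.fst ρ.p2 ρ.p1 ≫ ρ.p1 ∧
    t ≫ ρ.p2 = pullback.snd ρ.p2 ρ.p1 ≫ ρ.p2

def Rel.IsEquivalence [HasPullbacks 𝒞] (ρ : Rel 𝒞 X X) : Prop :=
  ρ.IsReflexive ∧ ρ.IsSymmetric ∧ ρ.IsTransitive

/-- A finitely complete category is a Mal'tsev category when every reflexive
relation in it is an equivalence relation. -/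
def IsMaltsev (𝒞 : Type u) [Category.{v} 𝒞] [HasPullbacks 𝒞] : Prop :=
  ∀ {X : 𝒞} (ρ : Rel 𝒞 X X), ρ.IsReflexive → ρ.IsEquivalence

/-- A square of type (1): split epimorphisms `f` (with section `s`) and `g`
(with section `t`), regular epimorphisms `c` and `d`, with `f·c = d·g` and
`s·d = c·t`. -/
structure IsSquare1 {A B E D : 𝒞} (f : A ⟶ B) (s : B ⟶ A) (g : E ⟶ D) (t : D ⟶ E)
    (c : E ⟶ A) (d : D ⟶ B) : Prop where
  sec_f : s ≫ f = 𝟙 B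
  sec_g : t ≫ g = 𝟙 D
  regepi_c : IsRegEpi c
  regepi_d : IsRegEpi d
  comm1 : c ≫ f = g ≫ d
  comm2 : d ≫ s = t ≫ c

/-- `N` is an ideal of morphisms. -/
def IsIdeal (N : MorphismProperty 𝒞) : Prop :=
  ∀ {X Y Z : 𝒞} (f : X ⟶ Y) (g : Y ⟶ Z), N f ∨ N g → N (f ≫ g)

/-- `n` is an `N`-kernel of `f`. -/
def IsNKernel (N : MorphismProperty 𝒞) {X Y K : 𝒞} (f : X ⟶ Y) (n : K ⟶ X) : Prop :=
  N (n ≫ f) ∧ ∀ {Z : 𝒞} (m : Z ⟶ X), N (m ≫ f) → ∃! u : Z ⟶ K, u ≫ n = m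

/-- Every morphism admits an `N`-kernel. -/
def HasNKernels (N : MorphismProperty 𝒞) : Prop :=
  ∀ {X Y : 𝒞} (f : X ⟶ Y), ∃ (K : 𝒞) (n : K ⟶ X), IsNKernel N f n

/-- `τ` is the largest star subrelation `ρ*` of the relation `ρ`. -/
def IsLargestStarSub (N : MorphismProperty 𝒞) (ρ τ : Rel 𝒞 X Y) : Prop :=
  τ.le ρ ∧ N τ.p1 ∧ ∀ σ : Rel 𝒞 X Y, σ.le ρ → N σ.p1 → σ.le τ

/-- `(s1, s2)` is the star-kernel of `f`: the universal star coequalised by `f`. -/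
def IsStarKernel (N : MorphismProperty 𝒞) {S X Y : 𝒞} (f : X ⟶ Y) (s1 s2 : S ⟶ X) : Prop :=
  N s1 ∧ s1 ≫ f = s2 ≫ f ∧
    ∀ {T : 𝒞} (t1 t2 : T ⟶ X), N t1 → t1 ≫ f = t2 ≫ f →
      ∃! u : T ⟶ S, u ≫ s1 = t1 ∧ u ≫ s2 = t2

/-- `(ν1, ν2)` is the star of the pullback relation of `(g, δ)`: the universal
pair with `ν1 ∈ N` and `δ·ν1 = g·ν2`. -/
def IsStarPullbackRel (N : MorphismProperty 𝒞) {W E D P : 𝒞} (δ : W ⟶ D) (g : E ⟶ D)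
    (ν1 : P ⟶ W) (ν2 : P ⟶ E) : Prop :=
  N ν1 ∧ ν1 ≫ δ = ν2 ≫ g ∧
    ∀ {T : 𝒞} (t1 : T ⟶ W) (t2 : T ⟶ E), N t1 → t1 ≫ δ = t2 ≫ g →
      ∃! u : T ⟶ P, u ≫ ν1 = t1 ∧ u ≫ ν2 = t2

/-- `f` is a coequaliser of `(s1, s2)`. -/
def IsCoeqOf {S X Y : 𝒞} (f : X ⟶ Y) (s1 s2 : S ⟶ X) : Prop :=
  s1 ≫ f = s2 ≫ f ∧ ∀ {T : 𝒞} (h : X ⟶ T), s1 ≫ h = s2 ≫ h → ∃! u : Y ⟶ T, f ≫ u = h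

/-- Star-regularity: every regular epimorphism is a coequaliser of a star. -/
def StarRegular (𝒞 : Type u) [Category.{v} 𝒞] (N : MorphismProperty 𝒞) : Prop :=
  ∀ {X Y : 𝒞} (f : X ⟶ Y), IsRegEpi f →
    ∃ (S : 𝒞) (s1 s2 : S ⟶ X), N s1 ∧ IsCoeqOf f s1 s2

/-- `f` is saturating: the induced morphism between the `N`-kernels of the
identities is a regular epimorphism. -/
def Saturating (N : MorphismProperty 𝒞) {X Y : 𝒞} (f : X ⟶ Y) : Prop :=
  ∀ {KX KY : 𝒞} (nX : KX ⟶ X) (nY : KY ⟶ Y), IsNKernel N (𝟙 X) nX → IsNKernel N (𝟙 Y) nY →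
    ∀ u : KX ⟶ KY, u ≫ nY = nX ≫ f → IsRegEpi u

/-- `X` is an `N`-trivial object. -/
def NTrivial (N : MorphismProperty 𝒞) (X : 𝒞) : Prop := N (𝟙 X)

/-- The multi-pointed category has enough trivial objects: `N` is a closed ideal and
`N`-trivial objects are closed under subobjects and squares. -/
def EnoughTrivialObjects [HasBinaryProducts 𝒞] (N : MorphismProperty 𝒞) : Prop :=
  (∀ {X Y : 𝒞} (f : X ⟶ Y), N f → ∃ (T : 𝒞) (p : X ⟶ T) (q : T ⟶ Y),
      NTrivial N T ∧ p ≫ q = f) ∧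
  (∀ {S X : 𝒞} (m : S ⟶ X), Mono m → NTrivial N X → NTrivial N S) ∧
  (∀ X : 𝒞, NTrivial N X → NTrivial N (X ⨯ X))

/-- A square of type (1) is a star-regular pushout when `(c g°)* = f° d*`. -/
def IsStarRegularPushout [HasPullbacks 𝒞] (N : MorphismProperty 𝒞) {A B E D : 𝒞}
    (f : A ⟶ B) (g : E ⟶ D) (c : E ⟶ A) (d : D ⟶ B) : Prop :=
  ∀ (ρ τ μ : Rel 𝒞 D A) (ds : Rel 𝒞 D B),
    IsRelComp (homRel c) (Rel.op (homRel g)) ρ → IsLargestStarSub N ρ τ →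
    IsLargestStarSub N (homRel d) ds → IsRelComp (Rel.op (homRel f)) ds μ →
    τ.equiv μ

/-- 2-star-permutability: `Eq(f) Eq(g)* = Eq(g) Eq(f)*` for all regular
epimorphisms `f`, `g` with the same domain. -/
def TwoStarPermutable (𝒞 : Type u) [Category.{v} 𝒞] [HasPullbacks 𝒞]
    (N : MorphismProperty 𝒞) : Prop :=
  ∀ {X Y Z : 𝒞} (f : X ⟶ Y) (g : X ⟶ Z), IsRegEpi f → IsRegEpi g →
    ∀ (sf sg : Rel 𝒞 X X), IsLargestStarSub N (kerPairRel f) sf →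
      IsLargestStarSub N (kerPairRel g) sg →
    ∀ (τ₁ τ₂ : Rel 𝒞 X X), IsRelComp (kerPairRel f) sg τ₁ →
      IsRelComp (kerPairRel g) sf τ₂ → τ₁.equiv τ₂

section Pointed

variable [HasZeroMorphisms 𝒞]

/-- `k` is a kernel of `f`. -/
def IsKernelOf {K X Y : 𝒞} (k : K ⟶ X) (f : X ⟶ Y) : Prop :=
  k ≫ f = 0 ∧ ∀ {Z : 𝒞} (m : Z ⟶ X), m ≫ f = 0 → ∃! u : Z ⟶ K, u ≫ k = m

/-- `f` is a cokernel of `k`. -/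
def IsCokernelOf {X Y K : 𝒞} (f : X ⟶ Y) (k : K ⟶ X) : Prop :=
  k ≫ f = 0 ∧ ∀ {T : 𝒞} (h : X ⟶ T), k ≫ h = 0 → ∃! u : Y ⟶ T, f ≫ u = h

/-- Short exact sequence `K → X ↠ Y`. -/
def IsShortExact {K X Y : 𝒞} (k : K ⟶ X) (f : X ⟶ Y) : Prop :=
  IsKernelOf k f ∧ IsCokernelOf f k

/-- Subtractivity: every reflexive, left punctual relation is right punctual. -/
def IsSubtractive (𝒞 : Type u) [Category.{v} 𝒞] [HasZeroMorphisms 𝒞] : Prop :=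
  ∀ {X : 𝒞} (ρ : Rel 𝒞 X X), ρ.IsReflexive →
    (∃ l : X ⟶ ρ.R, l ≫ ρ.p1 = 𝟙 X ∧ l ≫ ρ.p2 = 0) →
    (∃ r : X ⟶ ρ.R, r ≫ ρ.p1 = 0 ∧ r ≫ ρ.p2 = 𝟙 X)

end Pointed

section RegularEpimorphisms

theorem IsRegEpi.epi {f : X ⟶ Y} (hf : IsRegEpi f) : Epi f := by
  obtain ⟨_, a, b, hab, hdesc⟩ := hf
  refine ⟨fun u v huv => ?_⟩
  obtain ⟨w, -, hw⟩ := hdesc (f ≫ u) (by simp only [reassoc_of% hab])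
  exact (hw u rfl).trans (hw v huv.symm).symm

theorem isRegEpi_of_split {g : X ⟶ Y} {t : Y ⟶ X} (ht : t ≫ g = 𝟙 Y) : IsRegEpi g := by
  refine ⟨X, g ≫ t, 𝟙 X, by simp [ht], fun h hh => ⟨t ≫ h, ?_, fun y hy => ?_⟩⟩
  · simpa using hh
  · rw [← hy, reassoc_of% ht]

theorem isRegEpi_comp_isIso {q : X ⟶ Y} (hq : IsRegEpi q) (m : Y ⟶ Z) [IsIso m] :
    IsRegEpi (q ≫ m) := by
  obtain ⟨W, a, b, hab, hdesc⟩ := hq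
  refine ⟨W, a, b, by simp only [reassoc_of% hab], fun h hh => ?_⟩
  obtain ⟨u, hu, huniq⟩ := hdesc h hh
  refine ⟨inv m ≫ u, by simpa using hu, fun y hy => ?_⟩
  rw [← huniq (m ≫ y) (by simpa using hy)]
  simp

theorem IsRegEpi.exists_lift {e : X ⟶ Y} (he : IsRegEpi e) {Q : 𝒞} {m : Q ⟶ Z} [Mono m]
    {a : X ⟶ Q} {b : Y ⟶ Z} (h : a ≫ m = e ≫ b) : ∃ l : Y ⟶ Q, e ≫ l = a ∧ l ≫ m = b := by
  have := he.epi
  obtain ⟨_, p, q, hpq, hdesc⟩ := he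
  obtain ⟨l, hl, -⟩ := hdesc a (by rw [← cancel_mono m]; simp only [Category.assoc, h,
    reassoc_of% hpq])
  exact ⟨l, hl, by rw [← cancel_epi e, reassoc_of% hl, h]⟩

theorem isIso_of_mono_of_regEpi_fac {e : X ⟶ Y} (he : IsRegEpi e) {Q : 𝒞} {m : Q ⟶ Y} [Mono m]
    {a : X ⟶ Q} (h : a ≫ m = e) : IsIso m := by
  obtain ⟨l, -, hl⟩ := he.exists_lift (b := 𝟙 Y) (by rw [h, Category.comp_id])
  exact ⟨l, by rw [← cancel_mono m, Category.assoc, hl, Category.comp_id, Category.id_comp], hl⟩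

theorem IsRegEpi.exists_cover_lift [HasPullbacks 𝒞] (hstab : RegEpisStable 𝒞) {P Q T : 𝒞}
    {q : P ⟶ Q} (hq : IsRegEpi q) (u : T ⟶ Q) :
    ∃ (T' : 𝒞) (r : T' ⟶ T) (l : T' ⟶ P), IsRegEpi r ∧ l ≫ q = r ≫ u :=
  ⟨pullback u q, pullback.fst u q, pullback.snd u q,
    hstab _ _ _ _ (IsPullback.of_hasPullback u q) hq, pullback.condition.symm⟩

/-- Pullback stability of regular epimorphisms makes the factorisation of `h` through the
coequaliser of its kernel pair a monomorphism. -/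
theorem exists_regEpi_mono_fac [HasPullbacks 𝒞] (hcoeq : KernelPairsHaveCoequalisers 𝒞)
    (hstab : RegEpisStable 𝒞) (h : X ⟶ Y) :
    ∃ (Q : 𝒞) (q : X ⟶ Q) (m : Q ⟶ Y), IsRegEpi q ∧ Mono m ∧ q ≫ m = h := by
  obtain ⟨Q, q, hq, hdesc⟩ := hcoeq h _ _ (IsPullback.of_hasPullback h h)
  have hqre : IsRegEpi q := ⟨_, _, _, hq, hdesc⟩
  obtain ⟨m, hm, -⟩ := hdesc h pullback.condition
  refine ⟨Q, q, m, hqre, ⟨fun {T} u v huv => ?_⟩, hm⟩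
  obtain ⟨T₁, r₁, l₁, hr₁, hl₁⟩ := hqre.exists_cover_lift hstab u
  obtain ⟨T₂, r₂, l₂, hr₂, hl₂⟩ := hqre.exists_cover_lift hstab (r₁ ≫ v)
  have hl : (r₂ ≫ l₁) ≫ h = l₂ ≫ h := by
    simp only [← hm, Category.assoc, reassoc_of% hl₁, reassoc_of% hl₂, huv]
  have hlq : (r₂ ≫ l₁) ≫ q = l₂ ≫ q := by
    rw [← pullback.lift_fst _ _ hl, Category.assoc, hq, pullback.lift_snd_assoc]
  have := hr₁.epi
  have := hr₂.epi
  rw [← cancel_epi r₁, ← cancel_epi r₂, ← hl₂, ← hl₁, ← hlq, Category.assoc]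

theorem isRegEpi_comp [HasPullbacks 𝒞] (hcoeq : KernelPairsHaveCoequalisers 𝒞)
    (hstab : RegEpisStable 𝒞) {f : X ⟶ Y} {g : Y ⟶ Z} (hf : IsRegEpi f) (hg : IsRegEpi g) :
    IsRegEpi (f ≫ g) := by
  obtain ⟨Q, q, m, hq, hm, hqm⟩ := exists_regEpi_mono_fac hcoeq hstab (f ≫ g)
  obtain ⟨l, -, hl⟩ := hf.exists_lift hqm
  have := isIso_of_mono_of_regEpi_fac hg hl
  exact hqm ▸ isRegEpi_comp_isIso hq m

theorem isRegEpi_of_comp_left [HasPullbacks 𝒞] (hcoeq : KernelPairsHaveCoequalisers 𝒞)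
    (hstab : RegEpisStable 𝒞) {u : X ⟶ Y} {f : Y ⟶ Z} (h : IsRegEpi (u ≫ f)) : IsRegEpi f := by
  obtain ⟨Q, q, m, hq, hm, hqm⟩ := exists_regEpi_mono_fac hcoeq hstab f
  have := isIso_of_mono_of_regEpi_fac h (a := u ≫ q) (by rw [Category.assoc, hqm])
  exact hqm ▸ isRegEpi_comp_isIso hq m

end RegularEpimorphisms

section Relations

def Rel.Mem (ρ : Rel 𝒞 X Y) {T : 𝒞} (x : T ⟶ X) (y : T ⟶ Y) : Prop :=
  ∃ k : T ⟶ ρ.R, k ≫ ρ.p1 = x ∧ k ≫ ρ.p2 = y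

variable {ρ σ : Rel 𝒞 X Y} {T : 𝒞} {x : T ⟶ X} {y : T ⟶ Y}

theorem Rel.le_iff_mem : ρ.le σ ↔ σ.Mem ρ.p1 ρ.p2 := Iff.rfl

theorem Rel.mem_self (ρ : Rel 𝒞 X Y) : ρ.Mem ρ.p1 ρ.p2 :=
  ⟨𝟙 _, Category.id_comp _, Category.id_comp _⟩

theorem Rel.Mem.of_le (h : ρ.Mem x y) (hle : ρ.le σ) : σ.Mem x y := by
  obtain ⟨k, rfl, rfl⟩ := h
  obtain ⟨j, hj1, hj2⟩ := hle
  exact ⟨k ≫ j, by rw [Category.assoc, hj1], by rw [Category.assoc, hj2]⟩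

theorem Rel.Mem.of_precomp_regEpi {T' : 𝒞} {r : T' ⟶ T} (hr : IsRegEpi r)
    (h : ρ.Mem (r ≫ x) (r ≫ y)) : ρ.Mem x y := by
  have := hr.epi
  obtain ⟨k, hk1, hk2⟩ := h
  obtain ⟨_, a, b, hab, hdesc⟩ := hr
  obtain ⟨l, hl, -⟩ := hdesc k (ρ.jm _ _ (by simp only [Category.assoc, hk1, reassoc_of% hab])
    (by simp only [Category.assoc, hk2, reassoc_of% hab]))
  exact ⟨l, by rw [← cancel_epi r, reassoc_of% hl, hk1], by rw [← cancel_epi r, reassoc_of% hl, hk2]⟩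

end Relations

section Composition

variable [HasPullbacks 𝒞] {T : 𝒞}

theorem mem_kerPairRel_iff {f : X ⟶ Z} {x y : T ⟶ X} :
    (kerPairRel f).Mem x y ↔ x ≫ f = y ≫ f :=
  ⟨fun ⟨k, hk1, hk2⟩ => by
    rw [← hk1, ← hk2, Category.assoc, Category.assoc]
    exact k ≫= pullback.condition (f := f) (g := f),
  fun h => ⟨pullback.lift x y h, pullback.lift_fst _ _ _, pullback.lift_snd _ _ _⟩⟩

theorem exists_regEpi_rel_fac [HasBinaryProducts 𝒞]
    (hcoeq : KernelPairsHaveCoequalisers 𝒞) (hstab : RegEpisStable 𝒞) (x : T ⟶ X) (y : T ⟶ Y) :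
    ∃ (τ : Rel 𝒞 X Y) (e : T ⟶ τ.R), IsRegEpi e ∧ e ≫ τ.p1 = x ∧ e ≫ τ.p2 = y := by
  obtain ⟨Q, e, m, he, hm, hem⟩ := exists_regEpi_mono_fac hcoeq hstab (prod.lift x y)
  refine ⟨⟨Q, m ≫ prod.fst, m ≫ prod.snd, fun a b h1 h2 => ?_⟩, e, he, ?_, ?_⟩
  · rw [← cancel_mono m]
    exact prod.hom_ext (by simpa using h1) (by simpa using h2)
  · rw [reassoc_of% hem, prod.lift_fst]
  · rw [reassoc_of% hem, prod.lift_snd]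

variable {W : 𝒞} {ρ : Rel 𝒞 X Y} {σ : Rel 𝒞 Y W} {τ : Rel 𝒞 X W}

theorem exists_isRelComp [HasBinaryProducts 𝒞] (hcoeq : KernelPairsHaveCoequalisers 𝒞)
    (hstab : RegEpisStable 𝒞) (σ : Rel 𝒞 Y W) (ρ : Rel 𝒞 X Y) : ∃ τ, IsRelComp σ ρ τ := by
  obtain ⟨τ, e, he, h1, h2⟩ := exists_regEpi_rel_fac hcoeq hstab
    (pullback.fst ρ.p2 σ.p1 ≫ ρ.p1) (pullback.snd ρ.p2 σ.p1 ≫ σ.p2)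
  exact ⟨τ, e, he, h1, h2⟩

theorem IsRelComp.mem (hτ : IsRelComp σ ρ τ) {x : T ⟶ X} {y : T ⟶ Y} {z : T ⟶ W}
    (hxy : ρ.Mem x y) (hyz : σ.Mem y z) : τ.Mem x z := by
  obtain ⟨e, -, he1, he2⟩ := hτ
  obtain ⟨k, rfl, hk⟩ := hxy
  obtain ⟨l, hl, rfl⟩ := hyz
  refine ⟨pullback.lift k l (hk.trans hl.symm) ≫ e, ?_, ?_⟩
  · rw [Category.assoc, he1, pullback.lift_fst_assoc]
  · rw [Category.assoc, he2, pullback.lift_snd_assoc]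

theorem IsRelComp.exists_cover_of_mem (hstab : RegEpisStable 𝒞) (hτ : IsRelComp σ ρ τ)
    {x : T ⟶ X} {z : T ⟶ W} (h : τ.Mem x z) :
    ∃ (T' : 𝒞) (r : T' ⟶ T) (y : T' ⟶ Y), IsRegEpi r ∧ ρ.Mem (r ≫ x) y ∧ σ.Mem y (r ≫ z) := by
  obtain ⟨e, he, he1, he2⟩ := hτ
  obtain ⟨k, rfl, rfl⟩ := h
  obtain ⟨T', r, l, hr, hl⟩ := he.exists_cover_lift hstab k
  refine ⟨T', r, l ≫ pullback.fst _ _ ≫ ρ.p2, hr, ⟨l ≫ pullback.fst _ _, ?_, ?_⟩,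
    ⟨l ≫ pullback.snd _ _, ?_, ?_⟩⟩
  · rw [← reassoc_of% hl, he1, Category.assoc]
  · rw [Category.assoc]
  · rw [Category.assoc, ← pullback.condition]
  · rw [← reassoc_of% hl, he2, Category.assoc]

end Composition

section StarRelations

variable {N : MorphismProperty 𝒞}

theorem IsNKernel.mem {K : 𝒞} {n : K ⟶ X} (hn : IsNKernel N (𝟙 X) n) : N n := by
  simpa using hn.1

theorem IsNKernel.exists_lift {K : 𝒞} {n : K ⟶ X} (hn : IsNKernel N (𝟙 X) n) {T : 𝒞}
    (m : T ⟶ X) (hm : N m) : ∃ v : T ⟶ K, v ≫ n = m :=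
  (hn.2 m (by simpa using hm)).exists

theorem IsNKernel.mono (hN : IsIdeal N) {K : 𝒞} {n : K ⟶ X} (hn : IsNKernel N (𝟙 X) n) :
    Mono n :=
  ⟨fun u v h => (hn.2 (u ≫ n) (by simpa using hN u n (Or.inr hn.mem))).unique rfl h.symm⟩

variable [HasPullbacks 𝒞]

noncomputable def Rel.restrict (ρ : Rel 𝒞 X Y) {K : 𝒞} (n : K ⟶ X) [Mono n] : Rel 𝒞 X Y where
  R := pullback n ρ.p1
  p1 := pullback.fst _ _ ≫ n
  p2 := pullback.snd _ _ ≫ ρ.p2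
  jm a b h1 h2 := by
    have hfst : a ≫ pullback.fst n ρ.p1 = b ≫ pullback.fst n ρ.p1 := by
      simpa only [← cancel_mono n, Category.assoc] using h1
    refine pullback.hom_ext hfst (ρ.jm _ _ ?_ (by simpa using h2))
    simp only [Category.assoc, ← pullback.condition, reassoc_of% hfst]

theorem Rel.Mem.restrict {ρ : Rel 𝒞 X Y} {K : 𝒞} {n : K ⟶ X} [Mono n] {T : 𝒞} {x : T ⟶ X}
    {y : T ⟶ Y} (h : ρ.Mem x y) {v : T ⟶ K} (hv : v ≫ n = x) : (ρ.restrict n).Mem x y := by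
  obtain ⟨k, rfl, rfl⟩ := h
  refine ⟨pullback.lift v k hv, ?_, ?_⟩
  · simp only [Rel.restrict]; rw [pullback.lift_fst_assoc, hv]
  · simp only [Rel.restrict]; rw [pullback.lift_snd_assoc]

theorem IsNKernel.isLargestStarSub_restrict (hN : IsIdeal N) {K : 𝒞} {n : K ⟶ X}
    (hn : IsNKernel N (𝟙 X) n) [Mono n] (ρ : Rel 𝒞 X Y) :
    IsLargestStarSub N ρ (ρ.restrict n) := by
  refine ⟨⟨pullback.snd _ _, pullback.condition.symm, rfl⟩, hN _ _ (Or.inr hn.mem),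
    fun σ hle hσ => ?_⟩
  obtain ⟨v, hv⟩ := hn.exists_lift σ.p1 hσ
  exact ((Rel.mem_self σ).of_le hle).restrict hv

theorem exists_isLargestStarSub (hN : IsIdeal N) (hker : HasNKernels N) (ρ : Rel 𝒞 X Y) :
    ∃ τ, IsLargestStarSub N ρ τ := by
  obtain ⟨K, n, hn⟩ := hker (𝟙 X)
  have := hn.mono hN
  exact ⟨_, hn.isLargestStarSub_restrict hN ρ⟩

theorem IsLargestStarSub.mem_iff (hN : IsIdeal N) (hker : HasNKernels N) {ρ τ : Rel 𝒞 X Y}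
    (hτ : IsLargestStarSub N ρ τ) {T : 𝒞} {x : T ⟶ X} {y : T ⟶ Y} :
    τ.Mem x y ↔ ρ.Mem x y ∧ N x := by
  refine ⟨fun h => ⟨h.of_le hτ.1, ?_⟩, fun ⟨h, hx⟩ => ?_⟩
  · obtain ⟨k, rfl, -⟩ := h
    exact hN _ _ (Or.inr hτ.2.1)
  · obtain ⟨K, n, hn⟩ := hker (𝟙 X)
    have := hn.mono hN
    obtain ⟨v, hv⟩ := hn.exists_lift x hx
    have hres := hn.isLargestStarSub_restrict hN ρ
    exact (h.restrict hv).of_le (hτ.2.2 _ hres.1 hres.2.1)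

theorem IsLargestStarSub.mem_kerPairRel_iff (hN : IsIdeal N) (hker : HasNKernels N)
    {f : X ⟶ Y} {τ : Rel 𝒞 X X} (hτ : IsLargestStarSub N (kerPairRel f) τ) {T : 𝒞}
    {x y : T ⟶ X} : τ.Mem x y ↔ x ≫ f = y ≫ f ∧ N x := by
  rw [hτ.mem_iff hN hker, Paper.mem_kerPairRel_iff]

theorem exists_isStarPullbackRel (hN : IsIdeal N) (hker : HasNKernels N) {W E D : 𝒞}
    (δ : W ⟶ D) (g : E ⟶ D) : ∃ (P : 𝒞) (ν1 : P ⟶ W) (ν2 : P ⟶ E),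
      IsStarPullbackRel N δ g ν1 ν2 := by
  obtain ⟨K, n, hn⟩ := hker (𝟙 W)
  have := hn.mono hN
  refine ⟨pullback (n ≫ δ) g, pullback.fst _ _ ≫ n, pullback.snd _ _, hN _ _ (Or.inr hn.mem),
    by simp [pullback.condition], fun t1 t2 ht1 ht => ?_⟩
  obtain ⟨v, rfl⟩ := hn.exists_lift t1 ht1
  refine ⟨pullback.lift v t2 (by simpa using ht),
    ⟨pullback.lift_fst_assoc _ _ _ _, pullback.lift_snd _ _ _⟩, fun u ⟨hu1, hu2⟩ => ?_⟩
  refine pullback.hom_ext ?_ (by rw [hu2, pullback.lift_snd])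
  rw [← cancel_mono n, Category.assoc, hu1, pullback.lift_fst]

end StarRelations

section StarPullbackRelations

variable {N : MorphismProperty 𝒞} {W E D P : 𝒞} {δ : W ⟶ D} {g : E ⟶ D} {ν1 : P ⟶ W}
  {ν2 : P ⟶ E}

theorem IsStarPullbackRel.exists_lift (hν : IsStarPullbackRel N δ g ν1 ν2) {T : 𝒞}
    (t1 : T ⟶ W) (t2 : T ⟶ E) (ht1 : N t1) (ht : t1 ≫ δ = t2 ≫ g) :
    ∃ u : T ⟶ P, u ≫ ν1 = t1 ∧ u ≫ ν2 = t2 :=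
  (hν.2.2 t1 t2 ht1 ht).exists

theorem IsStarPullbackRel.hom_ext (hN : IsIdeal N) (hν : IsStarPullbackRel N δ g ν1 ν2)
    {T : 𝒞} {u v : T ⟶ P} (h1 : u ≫ ν1 = v ≫ ν1) (h2 : u ≫ ν2 = v ≫ ν2) : u = v :=
  (hν.2.2 (u ≫ ν1) (u ≫ ν2) (hN _ _ (Or.inr hν.1)) (by simp only [Category.assoc, hν.2.1])).unique
    ⟨rfl, rfl⟩ ⟨h1.symm, h2.symm⟩

end StarPullbackRelations

section Permutability

variable {N : MorphismProperty 𝒞}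

/-- The inclusion `Eq(f) Eq(g)* ≤ Eq(g) Eq(f)*` read on generalised elements: the middle
element `u` of the second composite need only exist after a regular epimorphic cover. -/
def StarPermutes (N : MorphismProperty 𝒞) (f : X ⟶ Y) (g : X ⟶ Z) : Prop :=
  ∀ {T : 𝒞} (x y z : T ⟶ X), N x → x ≫ g = y ≫ g → y ≫ f = z ≫ f →
    ∃ (T' : 𝒞) (r : T' ⟶ T) (u : T' ⟶ X), IsRegEpi r ∧ r ≫ x ≫ f = u ≫ f ∧ u ≫ g = r ≫ z ≫ g

variable [HasPullbacks 𝒞]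

theorem relComp_le_iff_starPermutes (hstab : RegEpisStable 𝒞) (hN : IsIdeal N)
    (hker : HasNKernels N) {f : X ⟶ Y} {g : X ⟶ Z} {sf sg τ₁ τ₂ : Rel 𝒞 X X}
    (hsf : IsLargestStarSub N (kerPairRel f) sf) (hsg : IsLargestStarSub N (kerPairRel g) sg)
    (hτ₁ : IsRelComp (kerPairRel f) sg τ₁) (hτ₂ : IsRelComp (kerPairRel g) sf τ₂) :
    τ₁.le τ₂ ↔ StarPermutes N f g := by
  constructor
  · intro hle T x y z hx hxy hyz
    have hxz : τ₂.Mem x z := (hτ₁.mem ((hsg.mem_kerPairRel_iff hN hker).2 ⟨hxy, hx⟩)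
      (mem_kerPairRel_iff.2 hyz)).of_le hle
    obtain ⟨T', r, u, hr, hxu, huz⟩ := hτ₂.exists_cover_of_mem hstab hxz
    refine ⟨T', r, u, hr, ?_, ?_⟩
    · simpa using ((hsf.mem_kerPairRel_iff hN hker).1 hxu).1
    · simpa using mem_kerPairRel_iff.1 huz
  · intro hperm
    rw [Rel.le_iff_mem]
    obtain ⟨T, r, y, hr, hxy, hyz⟩ := hτ₁.exists_cover_of_mem hstab (Rel.mem_self τ₁)
    obtain ⟨hxy, hx⟩ := (hsg.mem_kerPairRel_iff hN hker).1 hxy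
    obtain ⟨T', r', u, hr', hxu, huz⟩ := hperm _ _ _ hx hxy (mem_kerPairRel_iff.1 hyz)
    refine (Rel.Mem.of_precomp_regEpi hr' ?_).of_precomp_regEpi hr
    refine hτ₂.mem (y := u) ((hsf.mem_kerPairRel_iff hN hker).2 ⟨?_, hN _ _ (Or.inr hx)⟩)
      (mem_kerPairRel_iff.2 ?_)
    · simpa using hxu
    · simpa using huz

theorem twoStarPermutable_iff [HasBinaryProducts 𝒞] (hcoeq : KernelPairsHaveCoequalisers 𝒞)
    (hstab : RegEpisStable 𝒞) (hN : IsIdeal N) (hker : HasNKernels N) :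
    TwoStarPermutable 𝒞 N ↔ ∀ {X Y Z : 𝒞} (f : X ⟶ Y) (g : X ⟶ Z),
      IsRegEpi f → IsRegEpi g → StarPermutes N f g := by
  refine ⟨fun h X Y Z f g hf hg => ?_, fun h X Y Z f g hf hg sf sg hsf hsg τ₁ τ₂ hτ₁ hτ₂ =>
    ⟨(relComp_le_iff_starPermutes hstab hN hker hsf hsg hτ₁ hτ₂).2 (h f g hf hg),
      (relComp_le_iff_starPermutes hstab hN hker hsg hsf hτ₂ hτ₁).2 (h g f hg hf)⟩⟩
  obtain ⟨sf, hsf⟩ := exists_isLargestStarSub hN hker (kerPairRel f)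
  obtain ⟨sg, hsg⟩ := exists_isLargestStarSub hN hker (kerPairRel g)
  obtain ⟨τ₁, hτ₁⟩ := exists_isRelComp hcoeq hstab (kerPairRel f) sg
  obtain ⟨τ₂, hτ₂⟩ := exists_isRelComp hcoeq hstab (kerPairRel g) sf
  exact (relComp_le_iff_starPermutes hstab hN hker hsf hsg hτ₁ hτ₂).1
    (h f g hf hg sf sg hsf hsg τ₁ τ₂ hτ₁ hτ₂).1

end Permutability

section Cubes

variable {N : MorphismProperty 𝒞}

def StarPullbackComparisonsRegEpi (𝒞 : Type u) [Category.{v} 𝒞] (N : MorphismProperty 𝒞) :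
    Prop :=
  ∀ {A B E D W Y : 𝒞} (f : A ⟶ B) (s : B ⟶ A) (g : E ⟶ D) (t : D ⟶ E)
    (c : E ⟶ A) (d : D ⟶ B), IsSquare1 f s g t c d →
    ∀ (w : W ⟶ Y) (δ : W ⟶ D) (β : Y ⟶ B), IsRegEpi w → w ≫ β = δ ≫ d →
    ∀ {V U : 𝒞} (ν1 : V ⟶ W) (ν2 : V ⟶ E) (χ1 : U ⟶ Y) (χ2 : U ⟶ A),
      IsStarPullbackRel N δ g ν1 ν2 → IsStarPullbackRel N β f χ1 χ2 →
    ∀ (lam : V ⟶ U), lam ≫ χ1 = ν1 ≫ w → lam ≫ χ2 = ν2 ≫ c → IsRegEpi lam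

variable [HasPullbacks 𝒞]

theorem Saturating.exists_cover_lift (hstab : RegEpisStable 𝒞) (hN : IsIdeal N)
    (hker : HasNKernels N) {W : 𝒞} {w : W ⟶ Y} (hw : Saturating N w) {T : 𝒞} (y : T ⟶ Y)
    (hy : N y) : ∃ (T' : 𝒞) (r : T' ⟶ T) (x : T' ⟶ W), IsRegEpi r ∧ N x ∧ x ≫ w = r ≫ y := by
  obtain ⟨KW, nW, hnW⟩ := hker (𝟙 W)
  obtain ⟨KY, nY, hnY⟩ := hker (𝟙 Y)
  obtain ⟨u, hu⟩ := hnY.exists_lift (nW ≫ w) (hN _ _ (Or.inl hnW.mem))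
  obtain ⟨v, rfl⟩ := hnY.exists_lift y hy
  obtain ⟨T', r, κ, hr, hκ⟩ := (hw nW nY hnW hnY u hu).exists_cover_lift hstab v
  exact ⟨T', r, κ ≫ nW, hr, hN _ _ (Or.inr hnW.mem), by rw [Category.assoc, ← hu, reassoc_of% hκ]⟩

theorem IsSquare1.exists_cover_lift (hcoeq : KernelPairsHaveCoequalisers 𝒞)
    (hstab : RegEpisStable 𝒞) (hN : IsIdeal N) {A B E D : 𝒞} {f : A ⟶ B} {s : B ⟶ A}
    {g : E ⟶ D} {t : D ⟶ E} {c : E ⟶ A} {d : D ⟶ B} (hsq : IsSquare1 f s g t c d)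
    (hperm : StarPermutes N g c) {T : 𝒞} (x : T ⟶ D) (a : T ⟶ A) (hx : N x)
    (h : x ≫ d = a ≫ f) :
    ∃ (T' : 𝒞) (r : T' ⟶ T) (e : T' ⟶ E), IsRegEpi r ∧ e ≫ g = r ≫ x ∧ e ≫ c = r ≫ a := by
  obtain ⟨T₁, r₁, e₁, hr₁, he₁⟩ := hsq.regepi_c.exists_cover_lift hstab a
  obtain ⟨T₂, r₂, e, hr₂, heg, hec⟩ := hperm (r₁ ≫ x ≫ t) (e₁ ≫ g ≫ t) e₁
    (hN _ _ (Or.inr (hN _ _ (Or.inl hx))))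
    (by simp only [Category.assoc, ← hsq.comm2, reassoc_of% h, ← reassoc_of% he₁,
      reassoc_of% hsq.comm1])
    (by simp only [Category.assoc, hsq.sec_g, Category.comp_id])
  refine ⟨T₂, r₂ ≫ r₁, e, isRegEpi_comp hcoeq hstab hr₂ hr₁, ?_, ?_⟩
  · simpa [hsq.sec_g] using heg.symm
  · simpa [he₁] using hec

theorem starPullbackComparisonsRegEpi_of_starPermutes (hcoeq : KernelPairsHaveCoequalisers 𝒞)
    (hstab : RegEpisStable 𝒞) (hN : IsIdeal N) (hker : HasNKernels N)
    (hsat : ∀ {X Y : 𝒞} (f : X ⟶ Y), IsRegEpi f → Saturating N f)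
    (hperm : ∀ {X Y Z : 𝒞} (f : X ⟶ Y) (g : X ⟶ Z), IsRegEpi f → IsRegEpi g →
      StarPermutes N f g) :
    StarPullbackComparisonsRegEpi 𝒞 N := by
  intro A B E D W Y f s g t c d hsq w δ β hw hwβ V U ν1 ν2 χ1 χ2 hν hχ lam hl1 hl2
  obtain ⟨T₁, r₁, x, hr₁, hx, hxw⟩ := 
    Saturating.exists_cover_lift hstab hN hker (hsat w hw) χ1 hχ.1
  obtain ⟨T₂, r₂, e, hr₂, heg, hec⟩ := hsq.exists_cover_lift hcoeq hstab hN
    (hperm g c (isRegEpi_of_split hsq.sec_g) hsq.regepi_c) (x ≫ δ) (r₁ ≫ χ2)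
    (hN _ _ (Or.inl hx)) (by rw [Category.assoc, ← hwβ, reassoc_of% hxw, hχ.2.1, Category.assoc])
  obtain ⟨σ, hσ1, hσ2⟩ := hν.exists_lift (r₂ ≫ x) e (hN _ _ (Or.inr hx))
    (by rw [Category.assoc, heg])
  have hσlam : σ ≫ lam = r₂ ≫ r₁ := hχ.hom_ext hN
    (by simp only [Category.assoc, hl1, reassoc_of% hσ1, hxw])
    (by simp only [Category.assoc, hl2, reassoc_of% hσ2, hec])
  exact isRegEpi_of_comp_left hcoeq hstab (hσlam ▸ isRegEpi_comp hcoeq hstab hr₂ hr₁)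

/-- `S` is the image of `Eq(f)` under `g × g`. -/
theorem exists_isSquare1_kernelPair [HasBinaryProducts 𝒞] (hcoeq : KernelPairsHaveCoequalisers 𝒞)
    (hstab : RegEpisStable 𝒞) (f : X ⟶ Y) {g : X ⟶ Z} (hg : IsRegEpi g) :
    ∃ (S : Rel 𝒞 Z Z) (e : pullback f f ⟶ S.R) (s : Z ⟶ S.R),
      IsSquare1 S.p1 s (pullback.fst f f) (pullback.diagonal f) e g ∧
        e ≫ S.p2 = pullback.snd f f ≫ g := by
  obtain ⟨S, e, he, h1, h2⟩ := exists_regEpi_rel_fac hcoeq hstab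
    (pullback.fst f f ≫ g) (pullback.snd f f ≫ g)
  have hdiag : S.Mem (g ≫ 𝟙 Z) (g ≫ 𝟙 Z) :=
    ⟨pullback.diagonal f ≫ e, by simp [h1], by simp [h2]⟩
  obtain ⟨s, hs1, hs2⟩ := hdiag.of_precomp_regEpi hg
  refine ⟨S, e, s, ⟨hs1, by simp, he, hg, h1, S.jm _ _ ?_ ?_⟩, h2⟩
  · simp [hs1, h1]
  · simp [hs2, h2]

theorem starPermutes_of_starPullbackComparisonsRegEpi [HasBinaryProducts 𝒞]
    (hcoeq : KernelPairsHaveCoequalisers 𝒞) (hstab : RegEpisStable 𝒞) (hN : IsIdeal N)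
    (hker : HasNKernels N) (hcube : StarPullbackComparisonsRegEpi 𝒞 N) (f : X ⟶ Y) {g : X ⟶ Z}
    (hg : IsRegEpi g) : StarPermutes N f g := by
  intro T x y z hx hxy hyz
  obtain ⟨S, e, s, hsq, he2⟩ := exists_isSquare1_kernelPair hcoeq hstab f hg
  obtain ⟨V, ν1, ν2, hν⟩ := exists_isStarPullbackRel hN hker (𝟙 X) (pullback.fst f f)
  obtain ⟨U, χ1, χ2, hχ⟩ := exists_isStarPullbackRel hN hker g S.p1
  have hν12 : ν1 = ν2 ≫ pullback.fst f f := by simpa using hν.2.1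
  obtain ⟨lam, hl1, hl2⟩ := hχ.exists_lift (ν1 ≫ 𝟙 X) (ν2 ≫ e) (by simpa using hν.1)
    (by rw [Category.comp_id, hν12, Category.assoc, Category.assoc, hsq.comm1])
  have hlam : IsRegEpi lam := hcube _ _ _ _ _ _ hsq (𝟙 X) (𝟙 X) g (isRegEpi_of_split
    (Category.id_comp _)) (by simp) ν1 ν2 χ1 χ2 hν hχ lam hl1 hl2
  obtain ⟨θ, hθ1, hθ2⟩ := hχ.exists_lift x (pullback.lift y z hyz ≫ e) hx
    (by rw [hxy, Category.assoc, hsq.comm1, pullback.lift_fst_assoc])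
  obtain ⟨T', r, ξ, hr, hξ⟩ := hlam.exists_cover_lift hstab θ
  have hrx : r ≫ x = ξ ≫ ν2 ≫ pullback.fst f f := by
    rw [← hθ1, ← reassoc_of% hξ, hl1, Category.comp_id, hν12]
  refine ⟨T', r, ξ ≫ ν2 ≫ pullback.snd f f, hr, ?_, ?_⟩
  · rw [reassoc_of% hrx, Category.assoc, Category.assoc, pullback.condition]
  · rw [Category.assoc, Category.assoc, ← he2, ← reassoc_of% hl2, reassoc_of% hξ,
      reassoc_of% hθ2, he2, pullback.lift_snd_assoc]

end Cubes

/-- Let `𝒞` be a regular multi-pointed category with kernels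
whose regular epimorphisms are saturating. Then `𝒞` is 2-star-permutable iff for
every commutative cube whose front face is a square of type (1), with `w` a regular
epimorphism, `β·w = d·δ`, and whose back face consists of the stars of the pullback
relations of `(g, δ)` and `(f, β)` together with the comparison morphism `λ`
induced by `w` and `c`, the morphism `λ` is a regular epimorphism. -/
theorem statement7 [HasFiniteLimits 𝒞]
    (hcoeq : KernelPairsHaveCoequalisers 𝒞) (hstab : RegEpisStable 𝒞)
    (N : MorphismProperty 𝒞) (hN : IsIdeal N) (hker : HasNKernels N)
    (hsat : ∀ {X Y : 𝒞} (f : X ⟶ Y), IsRegEpi f → Saturating N f) :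
    TwoStarPermutable 𝒞 N ↔
      ∀ {A B E D W Y : 𝒞} (f : A ⟶ B) (s : B ⟶ A) (g : E ⟶ D) (t : D ⟶ E)
        (c : E ⟶ A) (d : D ⟶ B), IsSquare1 f s g t c d →
        ∀ (w : W ⟶ Y) (δ : W ⟶ D) (β : Y ⟶ B), IsRegEpi w → w ≫ β = δ ≫ d →
        ∀ {V U : 𝒞} (ν1 : V ⟶ W) (ν2 : V ⟶ E) (χ1 : U ⟶ Y) (χ2 : U ⟶ A),
          IsStarPullbackRel N δ g ν1 ν2 → IsStarPullbackRel N β f χ1 χ2 →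
        ∀ (lam : V ⟶ U), lam ≫ χ1 = ν1 ≫ w → lam ≫ χ2 = ν2 ≫ c →
          IsRegEpi lam := by
  rw [twoStarPermutable_iff hcoeq hstab hN hker]
  exact ⟨starPullbackComparisonsRegEpi_of_starPermutes hcoeq hstab hN hker hsat,
    fun hcube _ _ _ f _ _ hg => starPermutes_of_starPullbackComparisonsRegEpi hcoeq hstab hN hker
      hcube f hg⟩

end Paper
end

section
/- A pointed regular category C is subtractive if and only if every square of type (1) in C is right saturated, i.e. the induced morphism c̄: Ker(g) → Ker(f) between the kernels (the unique morphism with ker(f)·c̄ = c·ker(g)) is a regular epimorphism. -/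
/-!
For a square of type (1), consider on the elements `x` of `E` with `c x ∈ Ker f` the relation
`x₁ ~ x₂ ⟺ ∃ e, g e = g x₁ ∧ c e = c x₂`. It is reflexive, and left punctual via `e = t g x`,
since `c (t g x) = s (d g x) = s (f (c x)) = 0`. Subtractivity makes it right punctual: after a
regular epimorphic cover, some `e ∈ Ker g` has `c e = c x`, so `c̄` is a regular epimorphism.

Conversely, for a reflexive, left punctual relation `(r₁, r₂) : R ⇉ X` with left punctuality
witness `l`, the square with `g = r₁`, `t = l`, `c = r₂` over `X ⟶ 0` is of type (1). Right
saturation makes `r₂` restricted to `Ker r₁` a regular epimorphism; it is also monic since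
`(r₁, r₂)` is jointly monic, hence an isomorphism, whose inverse witnesses right punctuality.
-/

open CategoryTheory CategoryTheory.Limits

universe v u

namespace Paper

variable {𝒞 : Type u} [Category.{v} 𝒞]

variable {X Y Z : 𝒞}

theorem isColimit_cofork_of_existsUnique {W X Y : 𝒞} {a b : W ⟶ X} {f : X ⟶ Y}
    (w : a ≫ f = b ≫ f)
    (h : ∀ {T : 𝒞} (k : X ⟶ T), a ≫ k = b ≫ k → ∃! u : Y ⟶ T, f ≫ u = k) :
    Nonempty (IsColimit (Cofork.ofπ f w)) := by
  choose u hu huniq using fun s : Cofork a b => h s.π s.condition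
  exact ⟨Cofork.IsColimit.mk _ u hu huniq⟩

theorem isRegEpi_iff_isRegularEpi (f : X ⟶ Y) : IsRegEpi f ↔ IsRegularEpi f := by
  constructor
  · rintro ⟨W, a, b, w, h⟩
    exact isRegularEpi_of_regularEpi ⟨W, a, b, w, (isColimit_cofork_of_existsUnique w h).some⟩
  · intro
    exact ⟨_, IsRegularEpi.left f, IsRegularEpi.right f, IsRegularEpi.w f, fun k hk =>
      ⟨IsRegularEpi.desc f k hk, IsRegularEpi.fac f k hk, IsRegularEpi.uniq f k hk⟩⟩

theorem isRegEpi_of_comp_eq_id {f : X ⟶ Y} {s : Y ⟶ X} (hs : s ≫ f = 𝟙 Y) : IsRegEpi f := by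
  have : IsSplitEpi f := ⟨⟨⟨s, hs⟩⟩⟩
  exact (isRegEpi_iff_isRegularEpi f).2 inferInstance

theorem regular_of_kernelPairsHaveCoequalisers [HasFiniteLimits 𝒞]
    (hcoeq : KernelPairsHaveCoequalisers 𝒞) (hstab : RegEpisStable 𝒞) : Regular 𝒞 where
  hasCoequalizer_of_isKernelPair hk := by
    obtain ⟨_, q, w, h⟩ := hcoeq _ _ _ hk
    exact ⟨⟨⟨_, (isColimit_cofork_of_existsUnique w h).some⟩⟩⟩
  regularEpiIsStableUnderBaseChange := ⟨fun sq hg =>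
    (isRegEpi_iff_isRegularEpi _).1 (hstab _ _ _ _ sq.flip ((isRegEpi_iff_isRegularEpi _).2 hg))⟩

theorem isRegularEpi_of_comp_eq [Regular 𝒞] {W : 𝒞} {φ : W ⟶ X} {ψ : X ⟶ Y} {w : W ⟶ Z}
    {k : Z ⟶ Y} [IsRegularEpi w] [IsRegularEpi k] (h : φ ≫ ψ = w ≫ k) : IsRegularEpi ψ := by
  have : StrongEpi (φ ≫ ψ) := by rw [h]; infer_instance
  have := strongEpi_of_strongEpi φ ψ
  infer_instance

noncomputable def Rel.ofMono [HasBinaryProduct X Y] {I : 𝒞} (m : I ⟶ X ⨯ Y) [Mono m] :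
    Rel 𝒞 X Y where
  R := I
  p1 := m ≫ prod.fst
  p2 := m ≫ prod.snd
  jm a b h1 h2 := (cancel_mono m).1 (prod.hom_ext (by simpa using h1) (by simpa using h2))

section Pointed

variable [HasZeroMorphisms 𝒞]

theorem IsKernelOf.mono {K : 𝒞} {k : K ⟶ X} {f : X ⟶ Y} (hk : IsKernelOf k f) : Mono k :=
  ⟨fun a b hab => by
    obtain ⟨_, -, huniq⟩ := hk.2 (b ≫ k) (by rw [Category.assoc, hk.1, comp_zero])
    rw [huniq a hab, huniq b rfl]⟩

theorem isKernelOf_kernelι (f : X ⟶ Y) [HasKernel f] : IsKernelOf (kernel.ι f) f :=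
  ⟨kernel.condition f, fun m hm =>
    ⟨kernel.lift f m hm, kernel.lift_ι f m hm, fun _ hu => by ext; simp [hu]⟩⟩

theorem isKernelOf_id_zero : IsKernelOf (𝟙 X) (0 : X ⟶ Y) :=
  ⟨comp_zero, fun m _ => ⟨m, Category.comp_id m, fun _ hu => by simpa using hu⟩⟩

def RightSaturated {A B E D : 𝒞} (f : A ⟶ B) (g : E ⟶ D) (c : E ⟶ A) : Prop :=
  ∀ {Kg Kf : 𝒞} (kg : Kg ⟶ E) (kf : Kf ⟶ A), IsKernelOf kg g → IsKernelOf kf f →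
    ∀ cbar : Kg ⟶ Kf, cbar ≫ kf = kg ≫ c → IsRegEpi cbar

/-- Subtractivity applied to the image of `h`: the right punctuality witness lifts from the image
to `S` along a pullback of the regular epimorphism onto the image. -/
theorem IsSubtractive.exists_cover_of_span [Regular 𝒞] (hsub : IsSubtractive 𝒞) {S : 𝒞}
    (h : S ⟶ X ⨯ X) (hrefl : ∃ r : X ⟶ S, r ≫ h = prod.lift (𝟙 X) (𝟙 X))
    (hleft : ∃ l : X ⟶ S, l ≫ h = prod.lift (𝟙 X) 0) :
    ∃ (W : 𝒞) (w : W ⟶ X) (v : W ⟶ S), IsRegularEpi w ∧ v ≫ h = w ≫ prod.lift 0 (𝟙 X) := by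
  obtain ⟨r, hr⟩ := hrefl
  obtain ⟨l, hl⟩ := hleft
  let F := Regular.strongEpiMonoFactorisation h
  have : IsRegularEpi F.e :=
    inferInstanceAs (IsRegularEpi (Regular.strongEpiMonoFactorisation h).e)
  have hF : ∀ x : X ⟶ S, (x ≫ F.e) ≫ F.m = x ≫ h := fun x => by rw [Category.assoc, F.fac]
  obtain ⟨p, hp1, hp2⟩ : ∃ p : X ⟶ F.I, p ≫ F.m ≫ prod.fst = 0 ∧ p ≫ F.m ≫ prod.snd = 𝟙 X :=
    hsub (Rel.ofMono F.m)
      ⟨r ≫ F.e, by simp only [Rel.ofMono, ← Category.assoc, hF, hr, prod.lift_fst],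
        by simp only [Rel.ofMono, ← Category.assoc, hF, hr, prod.lift_snd]⟩
      ⟨l ≫ F.e, by simp only [Rel.ofMono, ← Category.assoc, hF, hl, prod.lift_fst],
        by simp only [Rel.ofMono, ← Category.assoc, hF, hl, prod.lift_snd]⟩
  have hp : p ≫ F.m = prod.lift 0 (𝟙 X) := by
    ext
    · rw [Category.assoc, hp1, prod.lift_fst]
    · rw [Category.assoc, hp2, prod.lift_snd]
  refine ⟨pullback F.e p, pullback.snd _ _, pullback.fst _ _, inferInstance, ?_⟩
  rw [← hp, ← pullback.condition_assoc, F.fac]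

theorem IsSubtractive.exists_cover_of_comp_eq [Regular 𝒞] (hsub : IsSubtractive 𝒞)
    {A D E : 𝒞} (g : E ⟶ D) (c : E ⟶ A) {y z : X ⟶ E} (hg : z ≫ g = y ≫ g) (hc : z ≫ c = 0) :
    ∃ (W : 𝒞) (w : W ⟶ X) (e : W ⟶ E), IsRegularEpi w ∧ e ≫ g = 0 ∧ e ≫ c = w ≫ y ≫ c := by
  -- `pullback.fst σ τ` spans the relation `x₁ ~ x₂ ⟺ ∃ e, g e = g (y x₁) ∧ c e = c (y x₂)`
  let σ := prod.map (y ≫ g) (y ≫ c)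
  let τ := prod.lift g c
  obtain ⟨W, w, v, hw, hv⟩ := hsub.exists_cover_of_span (pullback.fst σ τ)
    ⟨pullback.lift (prod.lift (𝟙 X) (𝟙 X)) y
      (by simp only [σ, τ, prod.lift_map, prod.comp_lift, Category.id_comp]),
      pullback.lift_fst _ _ _⟩
    ⟨pullback.lift (prod.lift (𝟙 X) 0) z
      (by simp only [σ, τ, prod.lift_map, prod.comp_lift, Category.id_comp, zero_comp, hg, hc]),
      pullback.lift_fst _ _ _⟩
  have he : (v ≫ pullback.snd σ τ) ≫ τ = w ≫ prod.lift 0 (y ≫ c) := by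
    rw [Category.assoc, ← pullback.condition, reassoc_of% hv]
    simp only [σ, prod.lift_map, zero_comp, Category.id_comp]
  refine ⟨W, w, v ≫ pullback.snd σ τ, hw, ?_, ?_⟩
  · simpa only [τ, prod.comp_lift, prod.lift_fst, comp_zero] using congrArg (· ≫ prod.fst) he
  · simpa only [τ, prod.comp_lift, prod.lift_snd] using congrArg (· ≫ prod.snd) he

theorem IsSubtractive.rightSaturated [Regular 𝒞] (hsub : IsSubtractive 𝒞) {A B E D : 𝒞}
    {f : A ⟶ B} {s : B ⟶ A} {g : E ⟶ D} {t : D ⟶ E} {c : E ⟶ A} {d : D ⟶ B}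
    (sq : IsSquare1 f s g t c d) : RightSaturated f g c := by
  intro Kg Kf kg kf hkg hkf cbar hcbar
  have : IsRegularEpi c := (isRegEpi_iff_isRegularEpi c).1 sq.regepi_c
  have := hkf.mono
  have hsplit : (pullback.fst c kf ≫ g ≫ t) ≫ c = 0 := by
    rw [Category.assoc, Category.assoc, ← sq.comm2, ← reassoc_of% sq.comm1,
      pullback.condition_assoc, reassoc_of% hkf.1, zero_comp, comp_zero]
  obtain ⟨W, w, e, _, heg, hec⟩ := hsub.exists_cover_of_comp_eq g c (y := pullback.fst c kf)
    (by rw [Category.assoc, Category.assoc, sq.sec_g, Category.comp_id]) hsplit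
  obtain ⟨φ, hφ, -⟩ := hkg.2 e heg
  have hφc : φ ≫ cbar = w ≫ pullback.snd c kf := (cancel_mono kf).1 (by
    rw [Category.assoc, hcbar, reassoc_of% hφ, hec, pullback.condition, Category.assoc])
  exact (isRegEpi_iff_isRegularEpi cbar).2 (isRegularEpi_of_comp_eq hφc)

theorem Rel.mono_kernelι_comp_p2 (ρ : Rel 𝒞 X Y) [HasKernel ρ.p1] :
    Mono (kernel.ι ρ.p1 ≫ ρ.p2) :=
  ⟨fun a b hab => (cancel_mono (kernel.ι ρ.p1)).1 <| ρ.jm _ _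
    (by simp only [Category.assoc, kernel.condition, comp_zero])
    (by simpa only [Category.assoc] using hab)⟩

open ZeroObject in
theorem isSubtractive_of_rightSaturated [HasZeroObject 𝒞] [HasKernels 𝒞]
    (h : ∀ {A B E D : 𝒞} (f : A ⟶ B) (s : B ⟶ A) (g : E ⟶ D) (t : D ⟶ E) (c : E ⟶ A)
      (d : D ⟶ B), IsSquare1 f s g t c d → RightSaturated f g c) :
    IsSubtractive 𝒞 := by
  rintro X ρ ⟨r, -, hr2⟩ ⟨l, hl1, hl2⟩
  have sq : IsSquare1 (0 : X ⟶ 0) 0 ρ.p1 l ρ.p2 0 :=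
    { sec_f := Subsingleton.elim _ _
      sec_g := hl1
      regepi_c := isRegEpi_of_comp_eq_id hr2
      regepi_d := isRegEpi_of_comp_eq_id (s := 0) (Subsingleton.elim _ _)
      comm1 := by rw [comp_zero, comp_zero]
      comm2 := by rw [comp_zero, hl2] }
  have hreg := h _ _ _ _ _ _ sq _ _ (isKernelOf_kernelι ρ.p1) isKernelOf_id_zero
    (kernel.ι ρ.p1 ≫ ρ.p2) (Category.comp_id _)
  have := (isRegEpi_iff_isRegularEpi _).1 hreg
  have := ρ.mono_kernelι_comp_p2
  have := isIso_of_mono_of_strongEpi (kernel.ι ρ.p1 ≫ ρ.p2)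
  exact ⟨inv (kernel.ι ρ.p1 ≫ ρ.p2) ≫ kernel.ι ρ.p1,
    by rw [Category.assoc, kernel.condition, comp_zero], by rw [Category.assoc, IsIso.inv_hom_id]⟩

end Pointed

/-- A pointed regular category is subtractive iff every square of
type (1) is right saturated: the induced morphism `c̄ : Ker(g) → Ker(f)` is a
regular epimorphism. -/
theorem statement8 [HasZeroObject 𝒞] [HasZeroMorphisms 𝒞] [HasFiniteLimits 𝒞]
    (hcoeq : KernelPairsHaveCoequalisers 𝒞) (hstab : RegEpisStable 𝒞) :
    IsSubtractive 𝒞 ↔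
      ∀ {A B E D : 𝒞} (f : A ⟶ B) (s : B ⟶ A) (g : E ⟶ D) (t : D ⟶ E)
        (c : E ⟶ A) (d : D ⟶ B), IsSquare1 f s g t c d →
        ∀ {Kg Kf : 𝒞} (kg : Kg ⟶ E) (kf : Kf ⟶ A),
          IsKernelOf kg g → IsKernelOf kf f →
        ∀ (cbar : Kg ⟶ Kf), cbar ≫ kf = kg ≫ c → IsRegEpi cbar := by
  have := regular_of_kernelPairsHaveCoequalisers hcoeq hstab
  exact ⟨fun hsub _ _ _ _ _ _ _ _ _ _ sq => hsub.rightSaturated sq,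
    isSubtractive_of_rightSaturated⟩

end Paper
end

section
/- Let C be a regular multi-pointed category with kernels and with enough trivial objects. Then the class of N-trivial objects of C is closed under binary products if and only if for every relation (σ1, σ2): S ↣ X×Y from an object X to an object Y and every morphism n with codomain S, whenever σ1·n ∈ N and σ2·n ∈ N one has n ∈ N. -/
open CategoryTheory CategoryTheory.Limits

universe v u

namespace Paper

variable {𝒞 : Type u} [Category.{v} 𝒞]

variable {X Y Z : 𝒞}

/- A relation `S ↣ X × Y` meeting `N` in both legs along `n` is pulled back along the product
`T₁ × T₂ → X × Y` of the trivial objects through which the two legs factor; this pullback is a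
subobject of the trivial object `T₁ × T₂`, and `n` factors through it. Conversely, the identity
of `X × Y` is such an `n` for the total relation. -/

theorem IsIdeal.comp_mem_of_nTrivial {N : MorphismProperty 𝒞} (hN : IsIdeal N) {T : 𝒞}
    (hT : NTrivial N T) (p : X ⟶ T) (q : T ⟶ Y) : N (p ≫ q) :=
  hN p q (Or.inr (by simpa using hN (𝟙 T) q (Or.inl hT)))

instance Rel.mono_lift [HasBinaryProduct X Y] (σ : Rel 𝒞 X Y) : Mono (prod.lift σ.p1 σ.p2) :=
  ⟨fun a b h => σ.jm a b (by simpa only [Category.assoc, prod.lift_fst] using h =≫ prod.fst)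
    (by simpa only [Category.assoc, prod.lift_snd] using h =≫ prod.snd)⟩

noncomputable def prodRel (X Y : 𝒞) [HasBinaryProduct X Y] : Rel 𝒞 X Y :=
  ⟨X ⨯ Y, prod.fst, prod.snd, fun _ _ h₁ h₂ => prod.hom_ext h₁ h₂⟩

theorem mem_of_comp_p1_mem_of_comp_p2_mem [HasPullbacks 𝒞] [HasBinaryProducts 𝒞]
    {N : MorphismProperty 𝒞} (hN : IsIdeal N)
    (hfactor : ∀ {X Y : 𝒞} (f : X ⟶ Y), N f →
      ∃ (T : 𝒞) (p : X ⟶ T) (q : T ⟶ Y), NTrivial N T ∧ p ≫ q = f)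
    (hsub : ∀ {S X : 𝒞} (m : S ⟶ X), Mono m → NTrivial N X → NTrivial N S)
    (hprod : ∀ X Y : 𝒞, NTrivial N X → NTrivial N Y → NTrivial N (X ⨯ Y))
    (σ : Rel 𝒞 X Y) (n : Z ⟶ σ.R) (h₁ : N (n ≫ σ.p1)) (h₂ : N (n ≫ σ.p2)) : N n := by
  obtain ⟨T₁, a₁, q₁, hT₁, hq₁⟩ := hfactor _ h₁
  obtain ⟨T₂, a₂, q₂, hT₂, hq₂⟩ := hfactor _ h₂
  have hcomm : n ≫ prod.lift σ.p1 σ.p2 = prod.lift a₁ a₂ ≫ prod.map q₁ q₂ := by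
    ext <;> simp [hq₁, hq₂]
  have hP : NTrivial N (pullback (prod.lift σ.p1 σ.p2) (prod.map q₁ q₂)) :=
    hsub (pullback.snd _ _) inferInstance (hprod _ _ hT₁ hT₂)
  rw [← pullback.lift_fst _ _ hcomm]
  exact hN.comp_mem_of_nTrivial hP _ _

theorem statement10_general [HasFiniteLimits 𝒞]
    (N : MorphismProperty 𝒞) (hN : IsIdeal N)
    (htriv : EnoughTrivialObjects N) :
    (∀ X Y : 𝒞, NTrivial N X → NTrivial N Y → NTrivial N (X ⨯ Y)) ↔
      ∀ {X Y Z : 𝒞} (σ : Rel 𝒞 X Y) (n : Z ⟶ σ.R),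
        N (n ≫ σ.p1) → N (n ≫ σ.p2) → N n := by
  constructor
  · intro hprod X Y Z σ n h₁ h₂
    exact mem_of_comp_p1_mem_of_comp_p2_mem hN htriv.1 htriv.2.1 hprod σ n h₁ h₂
  · intro h X Y hX hY
    exact h (prodRel X Y) (𝟙 _)
      (by simpa [prodRel] using hN.comp_mem_of_nTrivial hX prod.fst (𝟙 X))
      (by simpa [prodRel] using hN.comp_mem_of_nTrivial hY prod.snd (𝟙 Y))

/-- In a regular multi-pointed category with kernels and with
enough trivial objects, the `N`-trivial objects are closed under binary products
iff for every relation `(σ1, σ2) : S ↣ X × Y` and every morphism `n` into `S`,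
`σ1·n ∈ N` and `σ2·n ∈ N` imply `n ∈ N`. -/
theorem statement10 [HasFiniteLimits 𝒞]
    (hcoeq : KernelPairsHaveCoequalisers 𝒞) (hstab : RegEpisStable 𝒞)
    (N : MorphismProperty 𝒞) (hN : IsIdeal N) (hker : HasNKernels N)
    (htriv : EnoughTrivialObjects N) :
    (∀ X Y : 𝒞, NTrivial N X → NTrivial N Y → NTrivial N (X ⨯ Y)) ↔
      ∀ {X Y Z : 𝒞} (σ : Rel 𝒞 X Y) (n : Z ⟶ σ.R),
        N (n ≫ σ.p1) → N (n ≫ σ.p2) → N n :=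
  statement10_general N hN htriv

end Paper
end

section
/- Let C be a multi-pointed category with kernels and with enough trivial objects, in which N-trivial objects are closed under binary products. Consider a commutative cube in which c: C → A, d: D → B and w: W → Y are regular epimorphisms, g: C → D, f: A → B, δ: W → D and β: Y → B are morphisms with f·c = d·g and β·w = d·δ, and the back face consists of the stars of the pullback relations (W×_D C)* of (g, δ) and (Y×_B A)* of (f, β) together with the induced comparison morphism λ: (W×_D C)* → (Y×_B A)*. Let ḡ: Eq(c)* → Eq(d)* and δ̄: Eq(w)* → Eq(d)* be the morphisms induced between the star-kernels of c, of w and of d. Then the star-kernel Eq(λ)* of λ, together with its two induced morphisms to Eq(w)* and to Eq(c)*, is canonically isomorphic to the star of the pullback relation of (ḡ, δ̄), together with its two projections to Eq(w)* and Eq(c)*. -/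
open CategoryTheory CategoryTheory.Limits

universe v u

namespace Paper

variable {𝒞 : Type u} [Category.{v} 𝒞]

variable {X Y Z : 𝒞}

/-!
A morphism `T ⟶ Eq(λ)*` is a pair of morphisms `T ⟶ (W×_D C)*` identified by `λ`, the first in
`N`; by the universal properties of the stars involved this is the same as a pair
`t1 : T ⟶ Eq(w)*`, `t2 : T ⟶ Eq(c)*` with `t1 ∈ N` and `δ̄·t1 = ḡ·t2`. The only step that is not
pure diagram chasing is the transfer of membership in `N`: a morphism into the star of a pullback
relation whose two legs lie in `N` lies in `N` itself, because it then factors through the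
pullback of two `N`-trivial objects, which is `N`-trivial as a subobject of their product.
-/

lemma NTrivial.mem_of_source {N : MorphismProperty 𝒞} (hN : IsIdeal N) (hX : NTrivial N X)
    (f : X ⟶ Y) : N f := by
  simpa using hN (𝟙 X) f (.inl hX)

lemma IsStarKernel.isStarPullbackRel {N : MorphismProperty 𝒞} {S : 𝒞} {f : X ⟶ Y}
    {s1 s2 : S ⟶ X} (h : IsStarKernel N f s1 s2) : IsStarPullbackRel N f f s1 s2 :=
  h

namespace IsStarPullbackRel

variable {N : MorphismProperty 𝒞} {W E D P T : 𝒞} {δ : W ⟶ D} {g : E ⟶ D}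
  {ν1 : P ⟶ W} {ν2 : P ⟶ E}

noncomputable def lift (h : IsStarPullbackRel N δ g ν1 ν2) (t1 : T ⟶ W) (t2 : T ⟶ E)
    (ht1 : N t1) (ht : t1 ≫ δ = t2 ≫ g) : T ⟶ P :=
  (h.2.2 t1 t2 ht1 ht).exists.choose

section Lift

variable (h : IsStarPullbackRel N δ g ν1 ν2) (t1 : T ⟶ W) (t2 : T ⟶ E) (ht1 : N t1)
  (ht : t1 ≫ δ = t2 ≫ g)

@[simp]
lemma lift_fst : h.lift t1 t2 ht1 ht ≫ ν1 = t1 :=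
  (h.2.2 t1 t2 ht1 ht).exists.choose_spec.1

@[simp]
lemma lift_snd : h.lift t1 t2 ht1 ht ≫ ν2 = t2 :=
  (h.2.2 t1 t2 ht1 ht).exists.choose_spec.2

@[simp]
lemma lift_fst_assoc {Z : 𝒞} (k : W ⟶ Z) : h.lift t1 t2 ht1 ht ≫ ν1 ≫ k = t1 ≫ k := by
  rw [← Category.assoc, lift_fst]

@[simp]
lemma lift_snd_assoc {Z : 𝒞} (k : E ⟶ Z) : h.lift t1 t2 ht1 ht ≫ ν2 ≫ k = t2 ≫ k := by
  rw [← Category.assoc, lift_snd]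

end Lift

lemma hom_ext_s11 (h : IsStarPullbackRel N δ g ν1 ν2) (hN : IsIdeal N) {a b : T ⟶ P}
    (h1 : a ≫ ν1 = b ≫ ν1) (h2 : a ≫ ν2 = b ≫ ν2) : a = b :=
  (h.2.2 _ _ (hN a ν1 (.inr h.1)) (by simp only [Category.assoc, h.2.1])).unique
    ⟨rfl, rfl⟩ ⟨h1.symm, h2.symm⟩

lemma of_exists_lift (h1 : N ν1) (hc : ν1 ≫ δ = ν2 ≫ g)
    (hlift : ∀ {T : 𝒞} (t1 : T ⟶ W) (t2 : T ⟶ E), N t1 → t1 ≫ δ = t2 ≫ g →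
      ∃ z : T ⟶ P, z ≫ ν1 = t1 ∧ z ≫ ν2 = t2)
    (hext : ∀ {T : 𝒞} (a b : T ⟶ P), a ≫ ν1 = b ≫ ν1 → a ≫ ν2 = b ≫ ν2 → a = b) :
    IsStarPullbackRel N δ g ν1 ν2 :=
  ⟨h1, hc, fun t1 t2 ht1 ht =>
    let ⟨z, hz⟩ := hlift t1 t2 ht1 ht
    ⟨z, hz, fun _ hz' => hext _ _ (hz'.1.trans hz.1.symm) (hz'.2.trans hz.2.symm)⟩⟩

lemma mem_of_comp_mem [HasPullbacks 𝒞] [HasBinaryProducts 𝒞]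
    (h : IsStarPullbackRel N δ g ν1 ν2) (hN : IsIdeal N) (htriv : EnoughTrivialObjects N)
    (hprod : ∀ X Y : 𝒞, NTrivial N X → NTrivial N Y → NTrivial N (X ⨯ Y))
    {m : T ⟶ P} (h1 : N (m ≫ ν1)) (h2 : N (m ≫ ν2)) : N m := by
  obtain ⟨T1, a1, b1, hT1, hab1⟩ := htriv.1 _ h1
  obtain ⟨T2, a2, b2, hT2, hab2⟩ := htriv.1 _ h2
  have hPb : NTrivial N (pullback (b1 ≫ δ) (b2 ≫ g)) :=
    htriv.2.1 _ (mono_pullback_to_prod _ _) (hprod T1 T2 hT1 hT2)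
  let ψ := h.lift (pullback.fst _ _ ≫ b1) (pullback.snd _ _ ≫ b2) (hPb.mem_of_source hN _)
    (by simpa using pullback.condition)
  have hm : m = pullback.lift a1 a2 (by simp [reassoc_of% hab1, reassoc_of% hab2, h.2.1]) ≫ ψ :=
    h.hom_ext_s11 hN (by rw [Category.assoc, h.lift_fst, pullback.lift_fst_assoc, hab1])
      (by rw [Category.assoc, h.lift_snd, pullback.lift_snd_assoc, hab2])
  rw [hm]
  exact hN _ _ (.inr (hPb.mem_of_source hN ψ))

end IsStarPullbackRel

theorem statement11_general [HasFiniteLimits 𝒞]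
    (N : MorphismProperty 𝒞) (hN : IsIdeal N)
    (htriv : EnoughTrivialObjects N)
    (hprod : ∀ X Y : 𝒞, NTrivial N X → NTrivial N Y → NTrivial N (X ⨯ Y))
    -- the commutative cube
    {W Y E A D B : 𝒞} (w : W ⟶ Y) (c : E ⟶ A) (d : D ⟶ B)
    (g : E ⟶ D) (f : A ⟶ B) (δ : W ⟶ D) (β : Y ⟶ B)
    {V U : 𝒞} (ν1 : V ⟶ W) (ν2 : V ⟶ E) (χ1 : U ⟶ Y) (χ2 : U ⟶ A)
    (hν : IsStarPullbackRel N δ g ν1 ν2) (hχ : IsStarPullbackRel N β f χ1 χ2)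
    (lam : V ⟶ U) (hlam1 : lam ≫ χ1 = ν1 ≫ w) (hlam2 : lam ≫ χ2 = ν2 ≫ c)
    -- the star-kernels of c, d, w and the induced morphisms ḡ and δ̄
    {SW SC SD : 𝒞} (sw1 sw2 : SW ⟶ W) (sc1 sc2 : SC ⟶ E) (sd1 sd2 : SD ⟶ D)
    (hsw : IsStarKernel N w sw1 sw2) (hsc : IsStarKernel N c sc1 sc2)
    (hsd : IsStarKernel N d sd1 sd2)
    (gbar : SC ⟶ SD) (hg1 : gbar ≫ sd1 = sc1 ≫ g) (hg2 : gbar ≫ sd2 = sc2 ≫ g)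
    (δbar : SW ⟶ SD) (hδ1 : δbar ≫ sd1 = sw1 ≫ δ) (hδ2 : δbar ≫ sd2 = sw2 ≫ δ)
    -- the star-kernel of λ and its induced morphisms to Eq(w)* and Eq(c)*
    {L : 𝒞} (l1 l2 : L ⟶ V) (hl : IsStarKernel N lam l1 l2)
    (u : L ⟶ SW) (hu1 : u ≫ sw1 = l1 ≫ ν1) (hu2 : u ≫ sw2 = l2 ≫ ν1)
    (v : L ⟶ SC) (hv1 : v ≫ sc1 = l1 ≫ ν2) (hv2 : v ≫ sc2 = l2 ≫ ν2) :
    IsStarPullbackRel N δbar gbar u v := by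
  have hW := hsw.isStarPullbackRel
  have hC := hsc.isStarPullbackRel
  have hL := hl.isStarPullbackRel
  refine .of_exists_lift ?_ ?_ (fun t1 t2 ht1 ht => ?_) (fun a b h1 h2 => ?_)
  · exact hW.mem_of_comp_mem hN htriv hprod (hu1 ▸ hN _ _ (.inl hl.1)) (hu2 ▸ hN _ _ (.inr hν.1))
  · exact hsd.isStarPullbackRel.hom_ext_s11 hN
      (by simp [hδ1, hg1, reassoc_of% hu1, reassoc_of% hv1, hν.2.1])
      (by simp [hδ2, hg2, reassoc_of% hu2, reassoc_of% hv2, hν.2.1])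
  · have hk1 : (t1 ≫ sw1) ≫ δ = (t2 ≫ sc1) ≫ g := by simpa [hδ1, hg1] using ht =≫ sd1
    have hk2 : (t1 ≫ sw2) ≫ δ = (t2 ≫ sc2) ≫ g := by simpa [hδ2, hg2] using ht =≫ sd2
    let m1 := hν.lift _ _ (hN t1 sw1 (.inl ht1)) hk1
    let m2 := hν.lift _ _ (hN t1 sw2 (.inl ht1)) hk2
    have hm1 : N m1 := hν.mem_of_comp_mem hN htriv hprod
      (by simpa [m1] using hN t1 sw1 (.inl ht1)) (by simpa [m1] using hN t2 sc1 (.inr hsc.1))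
    have hm : m1 ≫ lam = m2 ≫ lam := hχ.hom_ext_s11 hN
      (by simp [m1, m2, hlam1, hsw.2.1]) (by simp [m1, m2, hlam2, hsc.2.1])
    exact ⟨hL.lift m1 m2 hm1 hm, hW.hom_ext_s11 hN (by simp [hu1, m1]) (by simp [hu2, m2]),
      hC.hom_ext_s11 hN (by simp [hv1, m1]) (by simp [hv2, m2])⟩
  · exact hL.hom_ext_s11 hN
      (hν.hom_ext_s11 hN (by simp [← hu1, reassoc_of% h1]) (by simp [← hv1, reassoc_of% h2]))
      (hν.hom_ext_s11 hN (by simp [← hu2, reassoc_of% h1]) (by simp [← hv2, reassoc_of% h2]))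

/-- In a multi-pointed category with kernels, enough trivial
objects and `N`-trivial objects closed under binary products, the star-kernel
`Eq(λ)*` of the comparison morphism `λ` between the stars of the pullback
relations, together with its induced morphisms to `Eq(w)*` and `Eq(c)*`, is the
star of the pullback relation of `(ḡ, δ̄)`. -/
theorem statement11 [HasFiniteLimits 𝒞]
    (N : MorphismProperty 𝒞) (hN : IsIdeal N) (hker : HasNKernels N)
    (htriv : EnoughTrivialObjects N)
    (hprod : ∀ X Y : 𝒞, NTrivial N X → NTrivial N Y → NTrivial N (X ⨯ Y))
    -- the commutative cube
    {W Y E A D B : 𝒞} (w : W ⟶ Y) (c : E ⟶ A) (d : D ⟶ B)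
    (g : E ⟶ D) (f : A ⟶ B) (δ : W ⟶ D) (β : Y ⟶ B)
    (hw : IsRegEpi w) (hc : IsRegEpi c) (hd : IsRegEpi d)
    (hcomm1 : c ≫ f = g ≫ d) (hcomm2 : w ≫ β = δ ≫ d)
    {V U : 𝒞} (ν1 : V ⟶ W) (ν2 : V ⟶ E) (χ1 : U ⟶ Y) (χ2 : U ⟶ A)
    (hν : IsStarPullbackRel N δ g ν1 ν2) (hχ : IsStarPullbackRel N β f χ1 χ2)
    (lam : V ⟶ U) (hlam1 : lam ≫ χ1 = ν1 ≫ w) (hlam2 : lam ≫ χ2 = ν2 ≫ c)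
    -- the star-kernels of c, d, w and the induced morphisms ḡ and δ̄
    {SW SC SD : 𝒞} (sw1 sw2 : SW ⟶ W) (sc1 sc2 : SC ⟶ E) (sd1 sd2 : SD ⟶ D)
    (hsw : IsStarKernel N w sw1 sw2) (hsc : IsStarKernel N c sc1 sc2)
    (hsd : IsStarKernel N d sd1 sd2)
    (gbar : SC ⟶ SD) (hg1 : gbar ≫ sd1 = sc1 ≫ g) (hg2 : gbar ≫ sd2 = sc2 ≫ g)
    (δbar : SW ⟶ SD) (hδ1 : δbar ≫ sd1 = sw1 ≫ δ) (hδ2 : δbar ≫ sd2 = sw2 ≫ δ)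
    -- the star-kernel of λ and its induced morphisms to Eq(w)* and Eq(c)*
    {L : 𝒞} (l1 l2 : L ⟶ V) (hl : IsStarKernel N lam l1 l2)
    (u : L ⟶ SW) (hu1 : u ≫ sw1 = l1 ≫ ν1) (hu2 : u ≫ sw2 = l2 ≫ ν1)
    (v : L ⟶ SC) (hv1 : v ≫ sc1 = l1 ≫ ν2) (hv2 : v ≫ sc2 = l2 ≫ ν2) :
    IsStarPullbackRel N δbar gbar u v :=
  statement11_general N hN htriv hprod w c d g f δ β ν1 ν2 χ1 χ2 hν hχ lam hlam1 hlam2 sw1 sw2 sc1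
    sc2 sd1 sd2 hsw hsc hsd gbar hg1 hg2 δbar hδ1 hδ2 l1 l2 hl u hu1 hu2 v hv1 hv2

end Paper
end
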